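/- Let Q ∈ ℝ^{n×n} be symmetric positive definite, A ∈ ℝ^{n×n} nonsingular, b ∈ ℝⁿ. If u ∈ ℝⁿ satisfies (AᵀQA − I)u⁺ + u + Aᵀb = 0, then QAu⁺ + b ∈ (A·ℝⁿ₊)* and ⟨QAu⁺ + b, Au⁺⟩ = 0. -/

import Mathlib

noncomputable section

/-- `E n` is the n-dimensional Euclidean space over ℝ. -/
abbrev E (n : ℕ) := EuclideanSpace ℝ (Fin n)

variable {n : ℕ}

/-- componentwise positive part `x⁺` -/
def posPart (x : E n) : E n := WithLp.toLp 2 (fun i => max (x i) 0)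

/-- componentwise negative part `x⁻` -/
def negPart (x : E n) : E n := WithLp.toLp 2 (fun i => max (-(x i)) 0)

/-- the 0-1 vector `sgn(x⁺)` indicating positive components of `x` -/
def sgnPos (x : E n) : Fin n → ℝ := fun i => if 0 < x i then 1 else 0

/-- matrix-vector multiplication on Euclidean space -/
def mulV (M : Matrix (Fin n) (Fin n) ℝ) (x : E n) : E n := Matrix.toEuclideanLin M x

/-- operator norm of a matrix induced by the Euclidean norm -/
def opN (M : Matrix (Fin n) (Fin n) ℝ) : ℝ :=
  ‖LinearMap.toContinuousLinearMap (Matrix.toEuclideanLin M)‖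

/-- the nonnegative orthant ℝⁿ₊ -/
def nonnegOrthant (n : ℕ) : Set (E n) := {x | ∀ i, 0 ≤ x i}

/-- the simplicial cone A·ℝⁿ₊ -/
def simplicialCone (A : Matrix (Fin n) (Fin n) ℝ) : Set (E n) :=
  {y | ∃ x ∈ nonnegOrthant n, y = mulV A x}

/-- the dual cone K* of a set K -/
def dualCone (K : Set (E n)) : Set (E n) := {y | ∀ x ∈ K, 0 ≤ (inner ℝ y x : ℝ)}

/-! Writing `w = QAu⁺ + b`, the equation says exactly `Aᵀw = u⁺ - u = u⁻`. Since
`⟨w, Ax⟩ = ⟨Aᵀw, x⟩`, dual-cone membership of `w` reduces to `u⁻ ≥ 0`, and the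
complementarity `⟨w, Au⁺⟩ = 0` to `⟨u⁻, u⁺⟩ = 0`. -/

lemma posPart_apply (u : E n) (i : Fin n) : posPart u i = max (u i) 0 := rfl

lemma negPart_apply (u : E n) (i : Fin n) : negPart u i = max (-u i) 0 := rfl

lemma mulV_mul (M N : Matrix (Fin n) (Fin n) ℝ) (x : E n) :
    mulV (M * N) x = mulV M (mulV N x) := by
  simp [mulV]

lemma mulV_sub (M N : Matrix (Fin n) (Fin n) ℝ) (x : E n) :
    mulV (M - N) x = mulV M x - mulV N x := by
  simp [mulV]

lemma mulV_one (x : E n) : mulV 1 x = x := by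
  simp [mulV]

lemma mulV_add (M : Matrix (Fin n) (Fin n) ℝ) (x y : E n) :
    mulV M (x + y) = mulV M x + mulV M y := map_add _ _ _

lemma inner_mulV_right (M : Matrix (Fin n) (Fin n) ℝ) (y x : E n) :
    inner ℝ y (mulV M x) = inner ℝ (mulV M.transpose y) x := by
  rw [mulV, mulV, ← Matrix.conjTranspose_eq_transpose_of_trivial,
    Matrix.toEuclideanLin_conjTranspose_eq_adjoint, LinearMap.adjoint_inner_left]

lemma posPart_sub_self (u : E n) : posPart u - u = negPart u := by
  ext i
  rw [PiLp.sub_apply, posPart_apply, negPart_apply]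
  rcases le_total (u i) 0 with h | h <;> simp [h]

lemma negPart_mem_nonnegOrthant (u : E n) : negPart u ∈ nonnegOrthant n :=
  fun _ => le_max_right _ _

lemma inner_negPart_posPart (u : E n) : inner ℝ (negPart u) (posPart u) = 0 := by
  refine Finset.sum_eq_zero fun i _ => ?_
  rw [RCLike.inner_apply, conj_trivial, posPart_apply, negPart_apply]
  rcases le_total (u i) 0 with h | h <;> simp [h]

lemma mem_dualCone_simplicialCone_of_mulV_transpose_mem {A : Matrix (Fin n) (Fin n) ℝ} {w : E n}
    (hw : mulV A.transpose w ∈ nonnegOrthant n) : w ∈ dualCone (simplicialCone A) := by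
  rintro _ ⟨x, hx, rfl⟩
  rw [inner_mulV_right]
  exact Finset.sum_nonneg fun i _ => mul_nonneg (hx i) (hw i)

lemma mulV_transpose_eq_negPart {Q A : Matrix (Fin n) (Fin n) ℝ} {b u : E n}
    (hu : mulV (A.transpose * Q * A - 1) (posPart u) + u + mulV A.transpose b = 0) :
    mulV A.transpose (mulV Q (mulV A (posPart u)) + b) = negPart u := by
  calc mulV A.transpose (mulV Q (mulV A (posPart u)) + b)
      = (mulV (A.transpose * Q * A - 1) (posPart u) + u + mulV A.transpose b)
          + (posPart u - u) := by
        rw [mulV_sub, mulV_one, mulV_mul, mulV_mul, mulV_add]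
        abel
    _ = negPart u := by rw [hu, zero_add, posPart_sub_self]

theorem stmt5_general (Q A : Matrix (Fin n) (Fin n) ℝ)
    (b u : E n)
    (hu : mulV (A.transpose * Q * A - 1) (posPart u) + u + mulV A.transpose b = 0) :
    mulV Q (mulV A (posPart u)) + b ∈ dualCone (simplicialCone A) ∧
      (inner ℝ (mulV Q (mulV A (posPart u)) + b) (mulV A (posPart u)) : ℝ) = 0 := by
  have hneg := mulV_transpose_eq_negPart hu
  refine ⟨mem_dualCone_simplicialCone_of_mulV_transpose_mem ?_, ?_⟩
  · exact hneg ▸ negPart_mem_nonnegOrthant u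
  · rw [inner_mulV_right, hneg, inner_negPart_posPart]

theorem stmt5 (Q A : Matrix (Fin n) (Fin n) ℝ) (hQ : Q.PosDef) (hA : IsUnit A.det)
    (b u : E n)
    (hu : mulV (A.transpose * Q * A - 1) (posPart u) + u + mulV A.transpose b = 0) :
    mulV Q (mulV A (posPart u)) + b ∈ dualCone (simplicialCone A) ∧
      (inner ℝ (mulV Q (mulV A (posPart u)) + b) (mulV A (posPart u)) : ℝ) = 0 :=
  stmt5_general Q A b u hu
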